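/- (Lemma 1) The subgroup R_n of B_n generated by the full twist d and the flips r_1, …, r_n is a normal subgroup of B_n. -/

import Mathlib

/-!
Normality is checked on generators: it suffices that conjugation by each `σ_j^{±1}` maps `d`
and every flip into `R_n`. The full twist is central, because `x ↦ δ⁻¹ x δ` with
`δ = σ_{n-1} ⋯ σ_1` shifts `σ_j` to `σ_{j+1}`, and its square carries `σ_{n-1}` to `σ_1`.
Each flip factors as `r_i = L_i A_i`, where `L_i = σ_{i-1} ⋯ σ_1² ⋯ σ_{i-1}` and
`A_i = σ_i ⋯ σ_{n-1}² ⋯ σ_i` let strand `i` encircle the strands on its left and on its right.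
Hence `σ_j` commutes with `r_i` for `i ∉ {j, j+1}`, `σ_j r_j σ_j⁻¹ = r_{j+1}`, and `σ_j`
commutes with `r_{j+1} r_j = (σ_j L_j)² (A_{j+1} σ_j)²`, because both pairs `(σ_j, L_j)` and
`(σ_j, A_{j+1})` satisfy the relation `x y x y = y x y x`. Together these express every
conjugate of a flip by `σ_j^{±1}` through flips.
-/

namespace Braid

/-- Braid relations on generators indexed by `Fin m`; the generator `i : Fin m` stands for the
Artin generator `σ_{i+1}` of the braid group on `m+1` strands: the relations are
`σ_i σ_j = σ_j σ_i` for `|i-j| ≥ 2` and `σ_i σ_{i+1} σ_i = σ_{i+1} σ_i σ_{i+1}`. -/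
def braidRels (m : ℕ) : Set (FreeGroup (Fin m)) :=
  {r | ∃ i j : Fin m, i.val + 2 ≤ j.val ∧
      r = .of i * .of j * (.of j * .of i)⁻¹} ∪
  {r | ∃ (i : Fin m) (hij : i.val + 1 < m),
      r = .of i * .of ⟨i.val + 1, hij⟩ * .of i *
        (.of ⟨i.val + 1, hij⟩ * .of i * .of ⟨i.val + 1, hij⟩)⁻¹}

/-- The Artin braid group `B_n` on `n` strands, presented with generators `σ_1, …, σ_{n-1}`
and the braid relations. -/
def BraidGroup (n : ℕ) : Type := PresentedGroup (braidRels (n - 1))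

instance (n : ℕ) : Group (BraidGroup n) := by unfold BraidGroup; infer_instance

/-- The Artin generator `σ_i` of `B_n`, for `1 ≤ i ≤ n-1` (junk value `1` otherwise). -/
def σ (n : ℕ) (i : ℕ) : BraidGroup n :=
  if h : 1 ≤ i ∧ i ≤ n - 1 then PresentedGroup.of ⟨i - 1, by omega⟩ else 1

/-- The ascending product `σ_a σ_{a+1} ⋯ σ_b` (empty product if `b < a`). -/
def up (n a b : ℕ) : BraidGroup n := ((List.range' a (b + 1 - a)).map (σ n)).prod

/-- The descending product `σ_a σ_{a-1} ⋯ σ_b` (empty product if `a < b`). -/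
def down (n a b : ℕ) : BraidGroup n :=
  ((List.range' b (a + 1 - b)).reverse.map (σ n)).prod

/-- The full twist `d = (σ_{n-1} ⋯ σ_2 σ_1)^n` of `B_n`. -/
def fullTwist (n : ℕ) : BraidGroup n := (down n (n - 1) 1) ^ n

/-- The flip `r_i = σ_{i-1} ⋯ σ_2 σ_1^2 σ_2 ⋯ σ_{n-2} σ_{n-1}^2 σ_{n-2} ⋯ σ_i` of `B_n`
(for `1 ≤ i ≤ n`), written as `(σ_{i-1} ⋯ σ_1) (σ_1 ⋯ σ_{n-1}) (σ_{n-1} ⋯ σ_i)`. -/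
def flip (n i : ℕ) : BraidGroup n :=
  down n (i - 1) 1 * up n 1 (n - 1) * down n (n - 1) i

/-- The descending product of flips `r_a r_{a-1} ⋯ r_b` (empty product if `a < b`). -/
def flipsDown (n a b : ℕ) : BraidGroup n :=
  ((List.range' b (a + 1 - b)).reverse.map (flip n)).prod

/-- The subgroup `R_n ⊆ B_n` generated by the full twist `d` and the flips `r_1, …, r_n`. -/
def R (n : ℕ) : Subgroup (BraidGroup n) :=
  Subgroup.closure ({fullTwist n} ∪ flip n '' Set.Icc 1 n)

/-- The subgroup `R_n' ⊆ B_n` generated by the flips `r_1, …, r_n`. -/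
def R' (n : ℕ) : Subgroup (BraidGroup n) :=
  Subgroup.closure (flip n '' Set.Icc 1 n)

private lemma swap_braid {n : ℕ} (a b c : Fin n) (hab : a ≠ b) (hbc : b ≠ c) (hac : a ≠ c) :
    Equiv.swap a b * Equiv.swap b c * Equiv.swap a b
      = Equiv.swap b c * Equiv.swap a b * Equiv.swap b c := by
  have h1 : Equiv.swap b a * Equiv.swap c b * Equiv.swap b a = Equiv.swap a c :=
    Equiv.swap_mul_swap_mul_swap (Ne.symm hbc) hac.symm
  have h2 : Equiv.swap b c * Equiv.swap a b * Equiv.swap b c = Equiv.swap c a :=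
    Equiv.swap_mul_swap_mul_swap hab hac
  rw [h2, Equiv.swap_comm a b, Equiv.swap_comm b c, h1, Equiv.swap_comm a c]

private lemma swap_commute {n : ℕ} (a b c d : Fin n)
    (hac : a ≠ c) (had : a ≠ d) (hbc : b ≠ c) (hbd : b ≠ d) :
    Equiv.swap a b * Equiv.swap c d = Equiv.swap c d * Equiv.swap a b := by
  refine Equiv.Perm.Disjoint.commute ?_
  intro x
  by_cases h1 : x = a
  · subst h1; right; exact Equiv.swap_apply_of_ne_of_ne hac had
  · by_cases h2 : x = b
    · subst h2; right; exact Equiv.swap_apply_of_ne_of_ne hbc hbd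
    · left; exact Equiv.swap_apply_of_ne_of_ne h1 h2

/-- The transposition `(i, i+1)` of `Fin n` associated to the generator `i : Fin (n-1)`. -/
def permGen (n : ℕ) (i : Fin (n - 1)) : Equiv.Perm (Fin n) :=
  Equiv.swap ⟨i.val, by have := i.isLt; omega⟩ ⟨i.val + 1, by have := i.isLt; omega⟩

/-- The homomorphism `B_n → Sym(n)` sending `σ_i` to the transposition `(i, i+1)`. -/
def toPerm (n : ℕ) : BraidGroup n →* Equiv.Perm (Fin n) :=
  PresentedGroup.toGroup (f := permGen n)
    (by
      rintro r (⟨i, j, hij, rfl⟩ | ⟨i, hij, rfl⟩) <;>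
        simp only [map_mul, map_inv, FreeGroup.lift_apply_of, permGen] <;> rw [mul_inv_eq_one]
      · refine swap_commute _ _ _ _ ?_ ?_ ?_ ?_ <;>
          · rw [ne_eq, Fin.mk.injEq]; omega
      · refine swap_braid _ _ _ ?_ ?_ ?_ <;>
          · rw [ne_eq, Fin.mk.injEq]; omega)

/-- The pure braid group `P_n`: the kernel of `B_n → Sym(n)`, `σ_i ↦ (i, i+1)`. -/
def P (n : ℕ) : Subgroup (BraidGroup n) := (toPerm n).ker

private lemma mk_rel_eq_one {m : ℕ} {r : FreeGroup (Fin m)} (h : r ∈ braidRels m) :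
    PresentedGroup.mk (braidRels m) r = 1 :=
  (QuotientGroup.eq_one_iff _).mpr (Subgroup.subset_normalClosure h)

lemma σ_comm {n i j : ℕ} (h1 : 1 ≤ i) (h2 : i + 2 ≤ j) (h3 : j ≤ n - 1) :
    σ n i * σ n j = σ n j * σ n i := by
  rw [show σ n i = (PresentedGroup.of ⟨i - 1, by omega⟩ : BraidGroup n) from
      dif_pos ⟨h1, by omega⟩,
    show σ n j = (PresentedGroup.of ⟨j - 1, by omega⟩ : BraidGroup n) from
      dif_pos ⟨by omega, h3⟩]
  have hmem : (FreeGroup.of (⟨i - 1, by omega⟩ : Fin (n-1)) * .of ⟨j - 1, by omega⟩ *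
      (.of ⟨j - 1, by omega⟩ * .of ⟨i - 1, by omega⟩)⁻¹) ∈ braidRels (n - 1) :=
    Or.inl ⟨⟨i - 1, by omega⟩, ⟨j - 1, by omega⟩, by show i - 1 + 2 ≤ j - 1; omega, rfl⟩
  have h := mk_rel_eq_one hmem
  rw [map_mul, map_inv, mul_inv_eq_one, map_mul, map_mul] at h
  exact h

set_option maxHeartbeats 1600000 in
lemma σ_braid {n i : ℕ} (h1 : 1 ≤ i) (h2 : i + 1 ≤ n - 1) :
    σ n i * σ n (i + 1) * σ n i = σ n (i + 1) * σ n i * σ n (i + 1) := by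
  rw [show σ n i = (PresentedGroup.of ⟨i - 1, by omega⟩ : BraidGroup n) from
      dif_pos ⟨h1, by omega⟩,
    show σ n (i + 1) = (PresentedGroup.of ⟨i + 1 - 1, by omega⟩ : BraidGroup n) from
      dif_pos ⟨by omega, h2⟩]
  have key : (⟨i + 1 - 1, by omega⟩ : Fin (n - 1)) = ⟨(i - 1) + 1, by omega⟩ := by
    rw [Fin.mk.injEq]; omega
  rw [key]
  have hmem : (FreeGroup.of (⟨i - 1, by omega⟩ : Fin (n-1)) * .of ⟨(i-1) + 1, by omega⟩ *
      .of ⟨i - 1, by omega⟩ *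
      (.of ⟨(i-1) + 1, by omega⟩ * .of ⟨i - 1, by omega⟩ * .of ⟨(i-1)+1, by omega⟩)⁻¹)
      ∈ braidRels (n - 1) :=
    Or.inr ⟨⟨i - 1, by omega⟩, by show i - 1 + 1 < n - 1; omega, rfl⟩
  have h := mk_rel_eq_one hmem
  rw [map_mul, map_inv, mul_inv_eq_one, map_mul, map_mul, map_mul, map_mul] at h
  exact h

/-- The canonical homomorphism `ι : B_{n-1} → B_n` determined by `σ_i ↦ σ_i`. -/
def ι (n : ℕ) : BraidGroup (n - 1) →* BraidGroup n :=
  PresentedGroup.toGroup (f := fun i : Fin (n - 1 - 1) => σ n (i.val + 1))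
    (by
      rintro r (⟨i, j, hij, rfl⟩ | ⟨i, hij, rfl⟩) <;>
        simp only [map_mul, map_inv, FreeGroup.lift_apply_of] <;> rw [mul_inv_eq_one]
      · exact σ_comm (by omega) (by omega) (by have := j.isLt; omega)
      · exact σ_braid (by omega) (by have := i.isLt; omega))

end Braid

section GroupLemmas

variable {G : Type*} [Group G]

theorem Subgroup.closure_normal_of_conj_mem {S T : Set G} (hT : Subgroup.closure T = ⊤)
    (hconj : ∀ t ∈ T, ∀ s ∈ S,
      t * s * t⁻¹ ∈ Subgroup.closure S ∧ t⁻¹ * s * t ∈ Subgroup.closure S) :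
    (Subgroup.closure S).Normal := by
  have conj_mem (g : G) (hg : ∀ s ∈ S, g * s * g⁻¹ ∈ Subgroup.closure S) :
      ∀ h ∈ Subgroup.closure S, g * h * g⁻¹ ∈ Subgroup.closure S :=
    (Subgroup.closure_le ((Subgroup.closure S).comap (MulAut.conj g).toMonoidHom)).2 hg
  rw [← Subgroup.normalizer_eq_top_iff, eq_top_iff, ← hT, Subgroup.closure_le]
  intro t ht h
  refine ⟨conj_mem t (fun s hs => (hconj t ht s hs).1) h, fun hh => ?_⟩
  simpa [mul_assoc] using conj_mem t⁻¹ (fun s hs => by simpa using (hconj t ht s hs).2) _ hh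

theorem conj_mem_of_mul_eq_mul_of_commute {H : Subgroup G} {s x y : G} (hx : x ∈ H)
    (hy : y ∈ H) (hsx : s * x = y * s) (hs : Commute s (y * x)) :
    (s * x * s⁻¹ ∈ H ∧ s⁻¹ * x * s ∈ H) ∧ (s * y * s⁻¹ ∈ H ∧ s⁻¹ * y * s ∈ H) := by
  have hx' : s * x * s⁻¹ = y := by rw [hsx, mul_inv_cancel_right]
  have hy' : s⁻¹ * y * s = x := by rw [mul_assoc, ← hsx, inv_mul_cancel_left]
  have hx'' : s⁻¹ * x * s = x⁻¹ * (y * x) := calc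
    s⁻¹ * x * s = (s⁻¹ * y * s)⁻¹ * (s⁻¹ * (y * x) * s) := by group
    _ = x⁻¹ * (y * x) := by rw [hy', hs.inv_mul_cancel]
  have hy'' : s * y * s⁻¹ = y * x * y⁻¹ := calc
    s * y * s⁻¹ = s * (y * x) * s⁻¹ * (s * x * s⁻¹)⁻¹ := by group
    _ = y * x * y⁻¹ := by rw [hs.mul_inv_cancel, hx']
  rw [hx', hy', hx'', hy'']
  exact ⟨⟨hy, mul_mem (inv_mem hx) (mul_mem hy hx)⟩,
    ⟨mul_mem (mul_mem hy hx) (inv_mem hy), hx⟩⟩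

theorem commute_of_braid4 {x y : G} (h : x * y * x * y = y * x * y * x) :
    Commute x (x * y * x * y) := by
  calc x * (x * y * x * y) = x * (y * x * y * x) := by rw [h]
    _ = x * y * x * y * x := by simp only [mul_assoc]

theorem braid4_step {a b v : G} (hvb : Commute v b) (hab : a * b * a = b * a * b)
    (hav : a * v * a * v = v * a * v * a) :
    b * (a * v * a) * b * (a * v * a) = a * v * a * b * (a * v * a) * b := by
  have hvb' : v * b = b * v := hvb.eq
  have hxbx : a * v * a * b * (a * v * a) = a * b * (v * a * v) * b * a := calc
    a * v * a * b * (a * v * a) = a * v * (a * b * a) * v * a := by simp only [mul_assoc]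
    _ = a * (v * b) * a * (b * v) * a := by rw [hab]; simp only [mul_assoc]
    _ = a * (b * v) * a * (v * b) * a := by rw [hvb']
    _ = a * b * (v * a * v) * b * a := by simp only [mul_assoc]
  calc b * (a * v * a) * b * (a * v * a)
      = b * (a * v * a * b * (a * v * a)) := by simp only [mul_assoc]
    _ = b * a * b * (v * a * v) * b * a := by rw [hxbx]; simp only [mul_assoc]
    _ = a * b * (a * v * a * v) * b * a := by rw [← hab]; simp only [mul_assoc]
    _ = a * b * (v * a * v * a) * b * a := by rw [hav]
    _ = a * b * (v * a * v) * (b * a * b) := by rw [← hab]; simp only [mul_assoc]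
    _ = a * v * a * b * (a * v * a) * b := by rw [hxbx]; simp only [mul_assoc]

theorem sq_conj_step {a b c v : G} (hvb : Commute v b) (hab : a * b * a = b * a * b)
    (h : a * (a * v) ^ 2 = (a * v) ^ 2 * c) : b * (b * a * v) ^ 2 = (b * a * v) ^ 2 * c := by
  have hvb' : v * b = b * v := hvb.eq
  have h' : a * v * a * v = v * a * v * c := by
    apply mul_left_cancel (a := a)
    simp only [sq] at h
    calc a * (a * v * a * v) = a * (a * v * (a * v)) := by simp only [mul_assoc]
      _ = a * v * (a * v) * c := h
      _ = a * (v * a * v * c) := by simp only [mul_assoc]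
  simp only [sq]
  calc b * (b * a * v * (b * a * v))
      = b * b * a * (v * b) * a * v := by simp only [mul_assoc]
    _ = b * b * a * (b * v) * a * v := by rw [hvb']
    _ = b * (b * a * b) * (v * a * v) := by simp only [mul_assoc]
    _ = b * (a * b * a) * (v * a * v) := by rw [← hab]
    _ = b * a * b * (a * v * a * v) := by simp only [mul_assoc]
    _ = b * a * b * (v * a * v * c) := by rw [h']
    _ = b * a * (b * v) * a * v * c := by simp only [mul_assoc]
    _ = b * a * (v * b) * a * v * c := by rw [← hvb']
    _ = b * a * v * (b * a * v) * c := by simp only [mul_assoc]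

end GroupLemmas

namespace Braid

variable {n : ℕ}

theorem σ_eq_one {i : ℕ} (h : i = 0 ∨ n - 1 < i) : σ n i = 1 :=
  dif_neg (by omega)

theorem commute_σ_σ {i j : ℕ} (h : i + 2 ≤ j) : Commute (σ n i) (σ n j) := by
  by_cases hij : 1 ≤ i ∧ j ≤ n - 1
  · exact σ_comm hij.1 h hij.2
  · rcases not_and_or.mp hij with hi | hj
    · rw [σ_eq_one (by omega)]; exact Commute.one_left _
    · rw [σ_eq_one (n := n) (i := j) (by omega)]; exact Commute.one_right _

theorem up_eq_one {a b : ℕ} (h : b < a) : up n a b = 1 := by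
  simp [up, show b + 1 - a = 0 by omega]

theorem down_eq_one {a b : ℕ} (h : a < b) : down n a b = 1 := by
  simp [down, show a + 1 - b = 0 by omega]

theorem up_eq_σ_mul {a b : ℕ} (h : a ≤ b) : up n a b = σ n a * up n (a + 1) b := by
  rw [up, show b + 1 - a = (b - a) + 1 by omega, List.range'_succ, up,
    show b + 1 - (a + 1) = b - a by omega]
  simp

theorem up_eq_mul_σ {a b : ℕ} (ha : 1 ≤ a) (h : a ≤ b) : up n a b = up n a (b - 1) * σ n b := by
  rw [up, show b + 1 - a = (b - a) + 1 by omega, List.range'_concat, up,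
    show b - 1 + 1 - a = b - a by omega, show a + 1 * (b - a) = b by omega]
  simp

theorem down_eq_σ_mul {a b : ℕ} (hb : 1 ≤ b) (h : b ≤ a) :
    down n a b = σ n a * down n (a - 1) b := by
  rw [down, show a + 1 - b = (a - b) + 1 by omega, List.range'_concat, down,
    show a - 1 + 1 - b = a - b by omega, show b + 1 * (a - b) = a by omega]
  simp

theorem down_eq_mul_σ {a b : ℕ} (h : b ≤ a) : down n a b = down n a (b + 1) * σ n b := by
  rw [down, show a + 1 - b = (a - b) + 1 by omega, List.range'_succ, down,
    show a + 1 - (b + 1) = a - b by omega]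
  simp

theorem up_mul_up {a b c : ℕ} (h1 : a ≤ c + 1) (h2 : c ≤ b) :
    up n a c * up n (c + 1) b = up n a b := by
  rw [up, up, up, show b + 1 - a = (c + 1 - a) + (b + 1 - (c + 1)) by omega,
    ← List.range'_append, show a + 1 * (c + 1 - a) = c + 1 by omega]
  simp

theorem commute_up {x : BraidGroup n} {a b : ℕ}
    (h : ∀ k, a ≤ k → k ≤ b → Commute x (σ n k)) : Commute x (up n a b) := by
  refine Commute.list_prod_right _ _ fun y hy => ?_
  obtain ⟨k, hk, rfl⟩ := List.mem_map.mp hy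
  rw [List.mem_range'_1] at hk
  exact h k (by omega) (by omega)

theorem commute_down {x : BraidGroup n} {a b : ℕ}
    (h : ∀ k, b ≤ k → k ≤ a → Commute x (σ n k)) : Commute x (down n a b) := by
  refine Commute.list_prod_right _ _ fun y hy => ?_
  obtain ⟨k, hk, rfl⟩ := List.mem_map.mp hy
  rw [List.mem_reverse, List.mem_range'_1] at hk
  exact h k (by omega) (by omega)

theorem σ_mul_down {j a b : ℕ} (hb : 1 ≤ b) (hbj : b ≤ j) (hja : j + 1 ≤ a) (ha : a ≤ n - 1) :
    σ n j * down n a b = down n a b * σ n (j + 1) := by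
  induction a, hja using Nat.le_induction with
  | base =>
    rw [down_eq_σ_mul hb (by omega), Nat.add_sub_cancel, down_eq_σ_mul hb hbj]
    have hc : Commute (σ n (j + 1)) (down n (j - 1) b) :=
      commute_down fun k _ hk => (commute_σ_σ (by omega)).symm
    calc σ n j * (σ n (j + 1) * (σ n j * down n (j - 1) b))
        = σ n j * σ n (j + 1) * σ n j * down n (j - 1) b := by simp only [mul_assoc]
      _ = σ n (j + 1) * σ n j * (σ n (j + 1) * down n (j - 1) b) := by
        rw [σ_braid (by omega) ha]; simp only [mul_assoc]
      _ = σ n (j + 1) * (σ n j * down n (j - 1) b) * σ n (j + 1) := by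
        rw [hc.eq]; simp only [mul_assoc]
  | succ a hja ih =>
    rw [down_eq_σ_mul hb (by omega), Nat.add_sub_cancel, ← mul_assoc,
      (commute_σ_σ (by omega)).eq, mul_assoc, ih (by omega), mul_assoc]

theorem σ_mul_up {j a b : ℕ} (ha : 1 ≤ a) (haj : a ≤ j) (hjb : j + 1 ≤ b) (hb : b ≤ n - 1) :
    σ n (j + 1) * up n a b = up n a b * σ n j := by
  induction b, hjb using Nat.le_induction with
  | base =>
    rw [up_eq_mul_σ ha (by omega), Nat.add_sub_cancel, up_eq_mul_σ ha haj]
    have hc : Commute (σ n (j + 1)) (up n a (j - 1)) :=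
      commute_up fun k _ hk => (commute_σ_σ (by omega)).symm
    calc σ n (j + 1) * (up n a (j - 1) * σ n j * σ n (j + 1))
        = up n a (j - 1) * (σ n (j + 1) * σ n j * σ n (j + 1)) := by
          rw [← mul_assoc, ← mul_assoc, hc.eq]; simp only [mul_assoc]
      _ = up n a (j - 1) * σ n j * σ n (j + 1) * σ n j := by
        rw [← σ_braid (by omega) hb]; simp only [mul_assoc]
  | succ b hjb ih =>
    rw [up_eq_mul_σ ha (by omega), Nat.add_sub_cancel, ← mul_assoc, ih (by omega), mul_assoc,
      (commute_σ_σ (by omega)).eq, mul_assoc]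

theorem σ_mul_down_sq {m : ℕ} (h1 : 1 ≤ m) (h2 : m ≤ n - 1) :
    σ n m * down n m 1 ^ 2 = down n m 1 ^ 2 * σ n 1 := by
  induction m, h1 using Nat.le_induction with
  | base =>
    rw [down_eq_σ_mul le_rfl le_rfl, Nat.sub_self, down_eq_one zero_lt_one, mul_one]
    exact (Commute.self_pow _ _).eq
  | succ m hm ih =>
    have ih := ih (by omega)
    rw [down_eq_σ_mul le_rfl hm] at ih
    rw [down_eq_σ_mul le_rfl (by omega), Nat.add_sub_cancel, down_eq_σ_mul le_rfl hm, ← mul_assoc]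
    exact sq_conj_step (commute_down fun k _ hk => (commute_σ_σ (by omega)).symm).symm
      (σ_braid hm h2) ih

theorem σ_mul_pow_down {j k : ℕ} (hj : 1 ≤ j) (hk : j + k ≤ n - 1) :
    σ n j * down n (n - 1) 1 ^ k = down n (n - 1) 1 ^ k * σ n (j + k) := by
  induction k with
  | zero => simp
  | succ k ih =>
    rw [pow_succ, ← mul_assoc, ih (by omega), mul_assoc,
      σ_mul_down le_rfl (by omega) (by omega) le_rfl, ← mul_assoc, ← add_assoc]

theorem commute_σ_fullTwist (j : ℕ) : Commute (σ n j) (fullTwist n) := by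
  by_cases hj : 1 ≤ j ∧ j ≤ n - 1
  swap
  · rw [σ_eq_one (by omega)]
    exact Commute.one_left _
  set δ := down n (n - 1) 1
  have hlast : Commute (σ n (n - 1)) (fullTwist n) := calc
    σ n (n - 1) * δ ^ n = σ n (n - 1) * δ ^ 2 * δ ^ (n - 2) := by
        rw [mul_assoc, ← pow_add, show 2 + (n - 2) = n by omega]
    _ = δ ^ 2 * (σ n 1 * δ ^ (n - 2)) := by
        rw [σ_mul_down_sq (by omega) le_rfl, mul_assoc]
    _ = δ ^ n * σ n (n - 1) := by
        rw [σ_mul_pow_down le_rfl (by omega), ← mul_assoc, ← pow_add,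
          show 2 + (n - 2) = n by omega, show 1 + (n - 2) = n - 1 by omega]
  have hshift : σ n j = δ ^ (n - 1 - j) * σ n (n - 1) * (δ ^ (n - 1 - j))⁻¹ :=
    eq_mul_inv_of_mul_eq <| by
      rw [σ_mul_pow_down hj.1 (by omega), show j + (n - 1 - j) = n - 1 by omega]
  have hδ : Commute (δ ^ (n - 1 - j)) (fullTwist n) := (Commute.refl δ).pow_pow _ _
  rw [hshift]
  exact (hδ.mul_left hlast).mul_left hδ.inv_left

def loopBelow (n i : ℕ) : BraidGroup n := down n (i - 1) 1 * up n 1 (i - 1)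

def loopAbove (n i : ℕ) : BraidGroup n := up n i (n - 1) * down n (n - 1) i

theorem flip_eq_loopBelow_mul_loopAbove {i : ℕ} (h1 : 1 ≤ i) (h2 : i ≤ n) :
    flip n i = loopBelow n i * loopAbove n i := by
  rw [flip, loopBelow, loopAbove, ← up_mul_up (c := i - 1) (by omega) (by omega),
    Nat.sub_add_cancel h1]
  simp only [mul_assoc]

theorem loopBelow_one : loopBelow n 1 = 1 := by
  rw [loopBelow, down_eq_one (by omega), up_eq_one (by omega), one_mul]

theorem loopBelow_succ {i : ℕ} (hi : 1 ≤ i) :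
    loopBelow n (i + 1) = σ n i * loopBelow n i * σ n i := by
  rw [loopBelow, loopBelow, Nat.add_sub_cancel, down_eq_σ_mul le_rfl hi, up_eq_mul_σ le_rfl hi]
  simp only [mul_assoc]

theorem loopAbove_eq_one {i : ℕ} (h : n - 1 < i) : loopAbove n i = 1 := by
  rw [loopAbove, up_eq_one h, down_eq_one h, one_mul]

theorem loopAbove_eq {i : ℕ} (hi : i ≤ n - 1) :
    loopAbove n i = σ n i * loopAbove n (i + 1) * σ n i := by
  rw [loopAbove, loopAbove, up_eq_σ_mul hi, down_eq_mul_σ hi]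
  simp only [mul_assoc]

theorem commute_σ_loopBelow {i j : ℕ} (hj : 1 ≤ j) (hi : i ≤ n) (h : j + 2 ≤ i ∨ i + 1 ≤ j) :
    Commute (σ n j) (loopBelow n i) := by
  rcases h with h | h
  · change σ n j * (down n (i - 1) 1 * up n 1 (i - 1)) = down n (i - 1) 1 * up n 1 (i - 1) * σ n j
    rw [← mul_assoc, σ_mul_down le_rfl hj (by omega) (by omega), mul_assoc,
      σ_mul_up le_rfl hj (by omega) (by omega), mul_assoc]
  · exact (commute_down fun k _ hk => (commute_σ_σ (by omega)).symm).mul_right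
      (commute_up fun k _ hk => (commute_σ_σ (by omega)).symm)

theorem commute_σ_loopAbove {i j : ℕ} (hi : 1 ≤ i) (hj : j ≤ n - 1) (h : j + 2 ≤ i ∨ i + 1 ≤ j) :
    Commute (σ n j) (loopAbove n i) := by
  rcases h with h | h
  · exact (commute_up fun k hk _ => commute_σ_σ (by omega)).mul_right
      (commute_down fun k hk _ => commute_σ_σ (by omega))
  · obtain ⟨j, rfl⟩ : ∃ k, j = k + 1 := ⟨j - 1, by omega⟩
    change σ n (j + 1) * (up n i (n - 1) * down n (n - 1) i) =
      up n i (n - 1) * down n (n - 1) i * σ n (j + 1)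
    rw [← mul_assoc, σ_mul_up hi (by omega) (by omega) le_rfl, mul_assoc,
      σ_mul_down hi (by omega) (by omega) le_rfl, mul_assoc]

theorem commute_loopBelow_loopAbove_succ (i : ℕ) :
    Commute (loopBelow n i) (loopAbove n (i + 1)) := by
  have hσ : ∀ k, i + 1 ≤ k → Commute (loopBelow n i) (σ n k) := fun k hk =>
    ((commute_down fun m _ hm => (commute_σ_σ (by omega)).symm).mul_right
      (commute_up fun m _ hm => (commute_σ_σ (by omega)).symm)).symm
  exact (commute_up fun k hk _ => hσ k hk).mul_right (commute_down fun k hk _ => hσ k hk)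

theorem σ_loopBelow_braid4 {i : ℕ} (h1 : 1 ≤ i) (h2 : i ≤ n - 1) :
    σ n i * loopBelow n i * σ n i * loopBelow n i =
      loopBelow n i * σ n i * loopBelow n i * σ n i := by
  induction i, h1 using Nat.le_induction with
  | base => simp only [loopBelow_one, mul_one, one_mul]
  | succ i hi ih =>
    rw [loopBelow_succ hi]
    exact braid4_step (commute_σ_loopBelow (by omega) (by omega) (Or.inr le_rfl)).symm
      (σ_braid hi h2) (ih (by omega))

theorem σ_loopAbove_braid4 {i : ℕ} (h1 : 1 ≤ i) (h2 : i ≤ n - 1) :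
    σ n i * loopAbove n (i + 1) * σ n i * loopAbove n (i + 1) =
      loopAbove n (i + 1) * σ n i * loopAbove n (i + 1) * σ n i := by
  induction h2 using Nat.decreasingInduction with
  | self => simp only [loopAbove_eq_one (show n - 1 < n - 1 + 1 by omega), mul_one, one_mul]
  | of_succ i hi ih =>
    rw [loopAbove_eq (show i + 1 ≤ n - 1 by omega)]
    exact braid4_step (commute_σ_loopAbove (by omega) (by omega) (Or.inl (by omega))).symm
      (σ_braid h1 (by omega)).symm (ih (by omega))

theorem σ_mul_flip {i : ℕ} (h1 : 1 ≤ i) (h2 : i ≤ n - 1) :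
    σ n i * flip n i = flip n (i + 1) * σ n i := by
  rw [flip_eq_loopBelow_mul_loopAbove h1 (by omega),
    flip_eq_loopBelow_mul_loopAbove (by omega) (by omega), loopBelow_succ h1, loopAbove_eq h2]
  simp only [mul_assoc]

theorem commute_σ_flip_succ_mul_flip {i : ℕ} (h1 : 1 ≤ i) (h2 : i ≤ n - 1) :
    Commute (σ n i) (flip n (i + 1) * flip n i) := by
  have hprod : flip n (i + 1) * flip n i =
      (σ n i * loopBelow n i * σ n i * loopBelow n i) *
        (loopAbove n (i + 1) * σ n i * loopAbove n (i + 1) * σ n i) := by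
    rw [flip_eq_loopBelow_mul_loopAbove (by omega) (by omega),
      flip_eq_loopBelow_mul_loopAbove h1 (by omega), loopBelow_succ h1, loopAbove_eq h2]
    calc σ n i * loopBelow n i * σ n i * loopAbove n (i + 1) *
          (loopBelow n i * (σ n i * loopAbove n (i + 1) * σ n i))
        = σ n i * loopBelow n i * σ n i * (loopAbove n (i + 1) * loopBelow n i) *
          (σ n i * loopAbove n (i + 1) * σ n i) := by simp only [mul_assoc]
      _ = _ := by rw [← (commute_loopBelow_loopAbove_succ i).eq]; simp only [mul_assoc]
  rw [hprod, ← σ_loopAbove_braid4 h1 h2]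
  exact (commute_of_braid4 (σ_loopBelow_braid4 h1 h2)).mul_right
    (commute_of_braid4 (σ_loopAbove_braid4 h1 h2))

theorem commute_σ_flip {i j : ℕ} (hj1 : 1 ≤ j) (hj2 : j ≤ n - 1) (hi1 : 1 ≤ i) (hi2 : i ≤ n)
    (h : j + 2 ≤ i ∨ i + 1 ≤ j) : Commute (σ n j) (flip n i) := by
  rw [flip_eq_loopBelow_mul_loopAbove hi1 hi2]
  exact (commute_σ_loopBelow hj1 hi2 h).mul_right (commute_σ_loopAbove hi1 hj2 h)

theorem conj_flip_mem_R' {i j : ℕ} (hj1 : 1 ≤ j) (hj2 : j ≤ n - 1) (hi1 : 1 ≤ i) (hi2 : i ≤ n) :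
    σ n j * flip n i * (σ n j)⁻¹ ∈ R' n ∧ (σ n j)⁻¹ * flip n i * σ n j ∈ R' n := by
  have mem (k : ℕ) (hk1 : 1 ≤ k) (hk2 : k ≤ n) : flip n k ∈ R' n :=
    Subgroup.subset_closure ⟨k, ⟨hk1, hk2⟩, rfl⟩
  have hpair := conj_mem_of_mul_eq_mul_of_commute (mem j hj1 (by omega))
    (mem (j + 1) (by omega) (by omega)) (σ_mul_flip hj1 hj2) (commute_σ_flip_succ_mul_flip hj1 hj2)
  obtain rfl | rfl | h := show i = j ∨ i = j + 1 ∨ (j + 2 ≤ i ∨ i + 1 ≤ j) by omega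
  · exact hpair.1
  · exact hpair.2
  · have hc := commute_σ_flip hj1 hj2 hi1 hi2 h
    rw [hc.mul_inv_cancel, hc.inv_mul_cancel]
    exact ⟨mem i hi1 hi2, mem i hi1 hi2⟩

theorem closure_σ : Subgroup.closure (σ n '' Set.Icc 1 (n - 1)) = ⊤ := by
  have hof : Subgroup.closure (Set.range (PresentedGroup.of : Fin (n - 1) → BraidGroup n)) =
      (⊤ : Subgroup (BraidGroup n)) :=
    PresentedGroup.closure_range_of _
  rw [eq_top_iff, ← hof]
  refine Subgroup.closure_mono ?_
  rintro _ ⟨x, rfl⟩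
  exact ⟨x + 1, ⟨by omega, by omega⟩, dif_pos ⟨by omega, by omega⟩⟩

theorem R_normal_general (n : ℕ) : (R n).Normal := by
  refine Subgroup.closure_normal_of_conj_mem closure_σ ?_
  rintro _ ⟨j, ⟨hj1, hj2⟩, rfl⟩ s (rfl | ⟨i, ⟨hi1, hi2⟩, rfl⟩)
  · rw [(commute_σ_fullTwist j).mul_inv_cancel, (commute_σ_fullTwist j).inv_mul_cancel]
    exact ⟨Subgroup.subset_closure (Or.inl rfl), Subgroup.subset_closure (Or.inl rfl)⟩
  · have hR' : R' n ≤ R n := Subgroup.closure_mono Set.subset_union_right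
    exact (conj_flip_mem_R' hj1 hj2 hi1 hi2).imp (hR' ·) (hR' ·)

/-- Lemma 1: the subgroup `R_n` of `B_n` generated by the full twist `d` and the flips
`r_1, …, r_n` is normal in `B_n`. -/
theorem R_normal (n : ℕ) (hn : 2 ≤ n) : (R n).Normal :=
  R_normal_general n

end Braid
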